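/- For the (d+1)n × (d+1)n block matrix A(ξ0,ξ) of the first-order formulation, and for ξ0 a real zero of p^ξ(ξ0) = det B(ξ0,ξ) of multiplicity ν such that dim ker B(ξ0,ξ) = ν, the map x ↦ (ξ0 x, ξ_1 x, ..., ξ_d x) is a linear isomorphism from ker B(ξ0,ξ) onto ker A(ξ0,ξ), provided ξ0 ≠ 0. In particular the geometric multiplicity of the eigenvalue −ξ0 of the first-order pencil equals ν. -/
import Mathlib


open Matrix

/-- The second-order symbol `B(ξ0, ξ) = ξ0² B00 + ξ0 Σ_j ξ_j C^j + Σ_{j,k} ξ_j ξ_k B^{jk}`. -/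
noncomputable def Bsym (n d : ℕ) (B00 : Matrix (Fin n) (Fin n) ℝ)
    (Cc : Fin d → Matrix (Fin n) (Fin n) ℝ)
    (B : Fin d → Fin d → Matrix (Fin n) (Fin n) ℝ)
    (ξ0 : ℝ) (ξ : Fin d → ℝ) : Matrix (Fin n) (Fin n) ℝ :=
  ξ0 ^ 2 • B00 + ξ0 • ∑ j, ξ j • Cc j + ∑ j, ∑ k, (ξ j * ξ k) • B j k

/-- The first-order block symbol `A(ξ0, ξ)`, of size `(d+1)n × (d+1)n`; block index
`Sum.inl ()` is the `P`-block and `Sum.inr i` the `Q_i`-blocks. -/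
noncomputable def Asym (n d : ℕ) (B00 : Matrix (Fin n) (Fin n) ℝ)
    (Cc : Fin d → Matrix (Fin n) (Fin n) ℝ)
    (B : Fin d → Fin d → Matrix (Fin n) (Fin n) ℝ)
    (ξ0 : ℝ) (ξ : Fin d → ℝ) :
    Matrix ((Unit ⊕ Fin d) × Fin n) ((Unit ⊕ Fin d) × Fin n) ℝ :=
  fun p q =>
    match p, q with
    | (Sum.inl _, a), (Sum.inl _, b) => (ξ0 • B00 + ∑ k, ξ k • Cc k) a b
    | (Sum.inl _, a), (Sum.inr j, b) => (∑ k, ξ k • B j k) a b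
    | (Sum.inr i, a), (Sum.inl _, b) => if a = b then -ξ i else 0
    | (Sum.inr i, a), (Sum.inr j, b) => if i = j ∧ a = b then ξ0 else 0

/-- The dispersion polynomial `p^ξ(ξ0) = det B(ξ0, ξ)` as a polynomial in `ξ0`. -/
noncomputable def dispPoly (n d : ℕ) (B00 : Matrix (Fin n) (Fin n) ℝ)
    (Cc : Fin d → Matrix (Fin n) (Fin n) ℝ)
    (B : Fin d → Fin d → Matrix (Fin n) (Fin n) ℝ)
    (ξ : Fin d → ℝ) : Polynomial ℝ :=
  ((Polynomial.X : Polynomial ℝ) ^ 2 • B00.map Polynomial.C +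
    (Polynomial.X : Polynomial ℝ) • (∑ j, ξ j • Cc j).map Polynomial.C +
    (∑ j, ∑ k, (ξ j * ξ k) • B j k).map Polynomial.C).det

noncomputable def Fmap (n d : ℕ) (ξ0 : ℝ) (ξ : Fin d → ℝ) :
    (Fin n → ℝ) →ₗ[ℝ] (((Unit ⊕ Fin d) × Fin n) → ℝ) where
  toFun x := fun p => Sum.elim (fun _ => ξ0) ξ p.1 * x p.2
  map_add' x y := by funext p; simp [mul_add]
  map_smul' c x := by funext p; simp [mul_left_comm, mul_comm]; ring

noncomputable def Gmap (n d : ℕ) (ξ0 : ℝ) :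
    (((Unit ⊕ Fin d) × Fin n) → ℝ) →ₗ[ℝ] (Fin n → ℝ) where
  toFun y := fun a => ξ0⁻¹ * y (Sum.inl (), a)
  map_add' x y := by funext a; simp [mul_add]
  map_smul' c x := by funext a; simp; ring

lemma Asym_mulVec_inl (n d : ℕ) (B00 : Matrix (Fin n) (Fin n) ℝ)
    (Cc : Fin d → Matrix (Fin n) (Fin n) ℝ)
    (B : Fin d → Fin d → Matrix (Fin n) (Fin n) ℝ)
    (ξ0 : ℝ) (ξ : Fin d → ℝ) (y : ((Unit ⊕ Fin d) × Fin n) → ℝ) (a : Fin n) :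
    (Asym n d B00 Cc B ξ0 ξ).mulVec y (Sum.inl (), a) =
      (∑ b, (ξ0 • B00 + ∑ k, ξ k • Cc k) a b * y (Sum.inl (), b)) +
      ∑ j, ∑ b, (∑ k, ξ k • B j k) a b * y (Sum.inr j, b) := by
  simp [Matrix.mulVec, dotProduct, Fintype.sum_prod_type, Fintype.sum_sum_type, Asym]

lemma Asym_mulVec_inr (n d : ℕ) (B00 : Matrix (Fin n) (Fin n) ℝ)
    (Cc : Fin d → Matrix (Fin n) (Fin n) ℝ)
    (B : Fin d → Fin d → Matrix (Fin n) (Fin n) ℝ)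
    (ξ0 : ℝ) (ξ : Fin d → ℝ) (y : ((Unit ⊕ Fin d) × Fin n) → ℝ) (i : Fin d) (a : Fin n) :
    (Asym n d B00 Cc B ξ0 ξ).mulVec y (Sum.inr i, a) =
      -ξ i * y (Sum.inl (), a) + ξ0 * y (Sum.inr i, a) := by
  simp [Matrix.mulVec, dotProduct, Fintype.sum_prod_type, Fintype.sum_sum_type, Asym,
    Finset.sum_ite_eq, ite_and]

lemma swap2 {α β : Type*} [Fintype α] [Fintype β] (f : α → β → ℝ) (g : β → α → ℝ)
    (h : ∀ a b, f a b = g b a) : ∑ a, ∑ b, f a b = ∑ b, ∑ a, g b a := by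
  rw [Finset.sum_comm]
  exact Finset.sum_congr rfl fun b _ => Finset.sum_congr rfl fun a _ => h a b

lemma swap3 {α β γ : Type*} [Fintype α] [Fintype β] [Fintype γ]
    (f : α → β → γ → ℝ) (g : β → α → γ → ℝ)
    (h : ∀ a b c, f a b c = g b a c) : ∑ a, ∑ b, ∑ c, f a b c = ∑ b, ∑ a, ∑ c, g b a c := by
  rw [Finset.sum_comm]
  exact Finset.sum_congr rfl fun b _ => Finset.sum_congr rfl fun a _ =>
    Finset.sum_congr rfl fun c _ => h a b c

lemma key1 (n d : ℕ) (B00 : Matrix (Fin n) (Fin n) ℝ)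
    (Cc : Fin d → Matrix (Fin n) (Fin n) ℝ)
    (B : Fin d → Fin d → Matrix (Fin n) (Fin n) ℝ)
    (ξ0 : ℝ) (ξ : Fin d → ℝ) (x : Fin n → ℝ) (a : Fin n) :
    (Asym n d B00 Cc B ξ0 ξ).mulVec (Fmap n d ξ0 ξ x) (Sum.inl (), a) =
      (Bsym n d B00 Cc B ξ0 ξ).mulVec x a := by
  rw [Asym_mulVec_inl]
  simp only [Fmap, LinearMap.coe_mk, AddHom.coe_mk, Sum.elim_inl, Sum.elim_inr,
    Bsym, Matrix.mulVec, dotProduct, Matrix.add_apply, Matrix.smul_apply,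
    Matrix.sum_apply, smul_eq_mul, Finset.sum_mul, Finset.mul_sum, add_mul,
    Finset.sum_add_distrib]
  congr 1
  · congr 1
    · exact Finset.sum_congr rfl fun _ _ => by ring
    · first
      | exact Finset.sum_congr rfl fun _ _ => Finset.sum_congr rfl fun _ _ => by ring
      | exact swap2 (α := Fin n) (β := Fin d) _ _ (fun _ _ => by ring)
      | exact swap2 (α := Fin d) (β := Fin n) _ _ (fun _ _ => by ring)
  · first
    | exact Finset.sum_congr rfl fun _ _ => Finset.sum_congr rfl fun _ _ =>
        Finset.sum_congr rfl fun _ _ => by ring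
    | exact swap3 (α := Fin d) (β := Fin n) (γ := Fin d) _ _ (fun _ _ _ => by ring)
    | exact swap3 (α := Fin n) (β := Fin d) (γ := Fin d) _ _ (fun _ _ _ => by ring)

lemma key2 (n d : ℕ) (B00 : Matrix (Fin n) (Fin n) ℝ)
    (Cc : Fin d → Matrix (Fin n) (Fin n) ℝ)
    (B : Fin d → Fin d → Matrix (Fin n) (Fin n) ℝ)
    (ξ0 : ℝ) (ξ : Fin d → ℝ) (x : Fin n → ℝ)
    (hx : (Bsym n d B00 Cc B ξ0 ξ).mulVec x = 0) :
    (Asym n d B00 Cc B ξ0 ξ).mulVec (Fmap n d ξ0 ξ x) = 0 := by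
  funext p
  obtain ⟨s | i, a⟩ := p
  · rw [key1, hx]; rfl
  · rw [Asym_mulVec_inr]
    simp [Fmap]; ring

lemma key3 (n d : ℕ) (B00 : Matrix (Fin n) (Fin n) ℝ)
    (Cc : Fin d → Matrix (Fin n) (Fin n) ℝ)
    (B : Fin d → Fin d → Matrix (Fin n) (Fin n) ℝ)
    (ξ0 : ℝ) (hξ0 : ξ0 ≠ 0) (ξ : Fin d → ℝ) (y : ((Unit ⊕ Fin d) × Fin n) → ℝ)
    (hy : (Asym n d B00 Cc B ξ0 ξ).mulVec y = 0) :
    Fmap n d ξ0 ξ (Gmap n d ξ0 y) = y ∧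
    (Bsym n d B00 Cc B ξ0 ξ).mulVec (Gmap n d ξ0 y) = 0 := by
  have hFG : Fmap n d ξ0 ξ (Gmap n d ξ0 y) = y := by
    funext p
    obtain ⟨s | i, a⟩ := p
    · simp [Fmap, Gmap]
      field_simp
    · have := congrFun hy (Sum.inr i, a)
      rw [Asym_mulVec_inr] at this
      simp only [Pi.zero_apply] at this
      simp only [Fmap, Gmap, LinearMap.coe_mk, AddHom.coe_mk, Sum.elim_inr]
      have : ξ0 * y (Sum.inr i, a) = ξ i * y (Sum.inl (), a) := by linarith
      field_simp
      linarith [this]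
  refine ⟨hFG, ?_⟩
  funext a
  have := congrFun hy (Sum.inl (), a)
  rw [← hFG, key1] at this
  simpa using this

/-- For `ξ0 ≠ 0` a zero of `p^ξ` of multiplicity `ν` with `dim ker B(ξ0,ξ) = ν`, the map
`x ↦ (ξ0 x, ξ_1 x, ..., ξ_d x)` is a linear isomorphism from `ker B(ξ0,ξ)` onto
`ker A(ξ0,ξ)`; in particular the geometric multiplicity of the eigenvalue `−ξ0` of the
first-order pencil equals `ν`. -/
theorem stmt8 (n d ν : ℕ) (B00 : Matrix (Fin n) (Fin n) ℝ)
    (Cc : Fin d → Matrix (Fin n) (Fin n) ℝ)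
    (B : Fin d → Fin d → Matrix (Fin n) (Fin n) ℝ)
    (ξ0 : ℝ) (hξ0 : ξ0 ≠ 0) (ξ : Fin d → ℝ)
    (hmult : (dispPoly n d B00 Cc B ξ).rootMultiplicity ξ0 = ν)
    (hν : Module.finrank ℝ (LinearMap.ker (Bsym n d B00 Cc B ξ0 ξ).mulVecLin) = ν) :
    (∃ e : LinearMap.ker (Bsym n d B00 Cc B ξ0 ξ).mulVecLin ≃ₗ[ℝ]
        LinearMap.ker (Asym n d B00 Cc B ξ0 ξ).mulVecLin,
      ∀ (x : LinearMap.ker (Bsym n d B00 Cc B ξ0 ξ).mulVecLin)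
        (j : Unit ⊕ Fin d) (a : Fin n),
        (e x : (Unit ⊕ Fin d) × Fin n → ℝ) (j, a) =
          Sum.elim (fun _ => ξ0) ξ j * (x : Fin n → ℝ) a) ∧
    Module.finrank ℝ (LinearMap.ker (Asym n d B00 Cc B ξ0 ξ).mulVecLin) = ν := by
  have hf : ∀ x ∈ LinearMap.ker (Bsym n d B00 Cc B ξ0 ξ).mulVecLin,
      Fmap n d ξ0 ξ x ∈ LinearMap.ker (Asym n d B00 Cc B ξ0 ξ).mulVecLin := by
    intro x hx
    rw [LinearMap.mem_ker, Matrix.mulVecLin_apply] at *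
    exact key2 n d B00 Cc B ξ0 ξ x hx
  have hg : ∀ y ∈ LinearMap.ker (Asym n d B00 Cc B ξ0 ξ).mulVecLin,
      Gmap n d ξ0 y ∈ LinearMap.ker (Bsym n d B00 Cc B ξ0 ξ).mulVecLin := by
    intro y hy
    rw [LinearMap.mem_ker, Matrix.mulVecLin_apply] at *
    exact (key3 n d B00 Cc B ξ0 hξ0 ξ y hy).2
  let f : LinearMap.ker (Bsym n d B00 Cc B ξ0 ξ).mulVecLin →ₗ[ℝ]
      LinearMap.ker (Asym n d B00 Cc B ξ0 ξ).mulVecLin :=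
    LinearMap.codRestrict _ ((Fmap n d ξ0 ξ).comp (LinearMap.ker _).subtype)
      (fun x => hf x x.2)
  let g : LinearMap.ker (Asym n d B00 Cc B ξ0 ξ).mulVecLin →ₗ[ℝ]
      LinearMap.ker (Bsym n d B00 Cc B ξ0 ξ).mulVecLin :=
    LinearMap.codRestrict _ ((Gmap n d ξ0).comp (LinearMap.ker _).subtype)
      (fun y => hg y y.2)
  have hfg : f.comp g = LinearMap.id := by
    ext y
    have hy : (Asym n d B00 Cc B ξ0 ξ).mulVec (y : _) = 0 := by
      have := y.2; rwa [LinearMap.mem_ker, Matrix.mulVecLin_apply] at this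
    exact congrFun (key3 n d B00 Cc B ξ0 hξ0 ξ y hy).1 _
  have hgf : g.comp f = LinearMap.id := by
    ext x
    simp [f, g, Fmap, Gmap]
    field_simp
  let e : LinearMap.ker (Bsym n d B00 Cc B ξ0 ξ).mulVecLin ≃ₗ[ℝ]
      LinearMap.ker (Asym n d B00 Cc B ξ0 ξ).mulVecLin := LinearEquiv.ofLinear f g hfg hgf
  refine ⟨⟨e, ?_⟩, ?_⟩
  · intro x j a; rfl
  · rw [← hν]
    exact (LinearEquiv.finrank_eq e).symm
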